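/- arXiv:2004.00771 — 7 statements merged into one kernel-verified Lean document; each statement's English description precedes it below -/
import Mathlib

section
/- If H₁ is a power Hadamard matrix PH(n, f(x)) and H₂ is a power Hadamard matrix PH(n', f(x)), then their Kronecker product H₁ ⊗ H₂ is a power Hadamard matrix PH(n·n', f(x)). -/
open LaurentPolynomial Polynomial

/-- `A` is the exponent matrix of a power Hadamard matrix `PH(n, f(x))`:
the matrix `H(x) = [x^{A i j}]` satisfies `H(x) H(x⁻¹)ᵀ ≡ n I mod f(x)`. -/
def IsPH {ι : Type*} [Fintype ι] [DecidableEq ι] (n : ℕ) (f : LaurentPolynomial ℚ)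
    (A : Matrix ι ι ℤ) : Prop :=
  ∀ i j, (∑ l, (T (A i l) * T (-(A j l)) : LaurentPolynomial ℚ)) -
      (if i = j then (n : LaurentPolynomial ℚ) else 0) ∈ Ideal.span {f}

theorem stmt5 (n n' : ℕ) (f : LaurentPolynomial ℚ)
    (A : Matrix (Fin n) (Fin n) ℤ) (B : Matrix (Fin n') (Fin n') ℤ)
    (hA : IsPH n f A) (hB : IsPH n' f B) :
    IsPH (n * n') f (fun p q : Fin n × Fin n' => A p.1 q.1 + B p.2 q.2) := by
  intro i j
  have key : (∑ l : Fin n × Fin n',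
      (T (A i.1 l.1 + B i.2 l.2) * T (-(A j.1 l.1 + B j.2 l.2)) : LaurentPolynomial ℚ))
      = (∑ l1, (T (A i.1 l1) * T (-(A j.1 l1)) : LaurentPolynomial ℚ)) *
        (∑ l2, (T (B i.2 l2) * T (-(B j.2 l2)) : LaurentPolynomial ℚ)) := by
    rw [Finset.sum_mul_sum]
    rw [Fintype.sum_prod_type]
    apply Finset.sum_congr rfl
    intro l1 _
    apply Finset.sum_congr rfl
    intro l2 _
    simp only [neg_add, T_add]
    ring
  simp only
  rw [key]
  have hc : (if i = j then ((n * n' : ℕ) : LaurentPolynomial ℚ) else 0)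
      = (if i.1 = j.1 then (n : LaurentPolynomial ℚ) else 0) *
        (if i.2 = j.2 then (n' : LaurentPolynomial ℚ) else 0) := by
    by_cases h1 : i.1 = j.1 <;> by_cases h2 : i.2 = j.2 <;>
      simp [Prod.ext_iff, h1, h2, Nat.cast_mul]
  rw [hc]
  have h1 := hA i.1 j.1
  have h2 := hB i.2 j.2
  have : (∑ l1, (T (A i.1 l1) * T (-(A j.1 l1)) : LaurentPolynomial ℚ)) *
        (∑ l2, (T (B i.2 l2) * T (-(B j.2 l2)) : LaurentPolynomial ℚ)) -
      (if i.1 = j.1 then (n : LaurentPolynomial ℚ) else 0) *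
        (if i.2 = j.2 then (n' : LaurentPolynomial ℚ) else 0)
      = ((∑ l1, (T (A i.1 l1) * T (-(A j.1 l1)) : LaurentPolynomial ℚ)) -
          (if i.1 = j.1 then (n : LaurentPolynomial ℚ) else 0)) *
        (∑ l2, (T (B i.2 l2) * T (-(B j.2 l2)) : LaurentPolynomial ℚ)) +
        (if i.1 = j.1 then (n : LaurentPolynomial ℚ) else 0) *
        ((∑ l2, (T (B i.2 l2) * T (-(B j.2 l2)) : LaurentPolynomial ℚ)) -
          (if i.2 = j.2 then (n' : LaurentPolynomial ℚ) else 0)) := by ring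
  rw [this]
  exact Ideal.add_mem _ (Ideal.mul_mem_right _ _ h1) (Ideal.mul_mem_left _ _ h2)
end

section
/- Let k > 2 be an integer, ζ a primitive k-th root of unity, and H = [ζ^{a_{ij}}] an n×n normalized Butson-Hadamard matrix BH(n,k). Let l be the smallest divisor of k with l ≥ 2. Then the minimum Hamming distance d between distinct rows of the exponent matrix [a_{ij}] (entries in ℤ_k) satisfies d ≥ n − n/l. -/
/-!
Let `c l = a_{il} - a_{jl}`, so that orthogonality of rows `i ≠ j` reads `∑_l ζ ^ c l = 0`.
All primitive `k`-th roots are Galois conjugate, so `∑_l ζ' ^ c l = 0` for each of them;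
summing over them gives `∑_l r(c l) = 0`, where `r(v) = ∑_u ζ ^ (u v)` (over units `u` of
`ℤ/k`) is the Ramanujan sum. By Hölder's formula `r(v) = φ(k)/φ(m) · μ(m)` with `m` the order
of `ζ ^ v`, so `r(0) = φ(k)`, while for `v ≠ 0` we have `m > 1`, `φ(m) ≥ l - 1` and hence
`r(v) ≥ -φ(k)/(l - 1)`. Thus the number `a` of agreements satisfies
`a φ(k) ≤ (n - a) φ(k)/(l - 1)`, i.e. `a l ≤ n`.
-/

open Finset Polynomial

theorem Nat.totient_div_totient_mul_minFac_sub_one_le {k m : ℕ} (hk : k ≠ 0) (hmk : m ∣ k)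
    (hm : m ≠ 1) : k.totient / m.totient * (k.minFac - 1) ≤ k.totient := by
  have hm0 : m ≠ 0 := by rintro rfl; exact hk (Nat.eq_zero_of_zero_dvd hmk)
  have hprime : m.minFac.Prime := Nat.minFac_prime hm
  have hminFac : k.minFac ≤ m.minFac :=
    Nat.minFac_le_of_dvd hprime.two_le ((Nat.minFac_dvd m).trans hmk)
  have htotient : m.minFac - 1 ≤ m.totient := by
    rw [← Nat.totient_prime hprime]
    exact Nat.le_of_dvd (Nat.totient_pos.mpr (by omega)) (Nat.totient_dvd_of_dvd (Nat.minFac_dvd m))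
  calc k.totient / m.totient * (k.minFac - 1)
      ≤ k.totient / m.totient * m.totient := Nat.mul_le_mul_left _ (by omega)
    _ = k.totient := Nat.div_mul_cancel (Nat.totient_dvd_of_dvd hmk)

theorem Nat.neg_totient_le_minFac_sub_one_mul_totient_div_mul_moebius {k m : ℕ} (hk : k ≠ 0)
    (hmk : m ∣ k) (hm : m ≠ 1) :
    -(k.totient : ℤ) ≤
      (k.minFac - 1) * ((k.totient / m.totient : ℕ) * ArithmeticFunction.moebius m) := by
  have hbound : ((k.totient / m.totient : ℕ) * (k.minFac - 1) : ℤ) ≤ k.totient := by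
    have := Nat.totient_div_totient_mul_minFac_sub_one_le hk hmk hm
    rwa [← Nat.cast_le (α := ℤ), Nat.cast_mul, Nat.cast_sub k.minFac_pos, Nat.cast_one] at this
  have hμ := abs_le.mp (ArithmeticFunction.abs_moebius_le_one (n := m))
  have hp : (1 : ℤ) ≤ k.minFac := by exact_mod_cast k.minFac_pos
  nlinarith [mul_nonneg (Int.natCast_nonneg (k.totient / m.totient)) (sub_nonneg.mpr hp)]

theorem Finset.card_mul_le_of_sum_eq_zero {ι : Type*} [Fintype ι] (s : Finset ι) (f : ι → ℤ)
    {t : ℤ} (ht : 0 < t) {q : ℕ} (hsum : ∑ i, f i = 0) (hs : ∀ i ∈ s, f i = t)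
    (hsc : ∀ i ∉ s, -t ≤ (q - 1) * f i) :
    #s * q ≤ Fintype.card ι := by
  classical
  have hpointwise : ∀ i, (if i ∈ s then q * t else 0) - t ≤ (q - 1) * f i := fun i ↦ by
    split_ifs with hi
    · rw [hs i hi]; linarith
    · linarith [hsc i hi]
  have hcount := sum_le_sum fun i (_ : i ∈ univ) ↦ hpointwise i
  rw [← mul_sum, hsum, mul_zero, sum_sub_distrib, ← sum_filter, filter_mem_eq_inter, univ_inter,
    sum_const, sum_const, card_univ, nsmul_eq_mul, nsmul_eq_mul] at hcount
  have : (#s * q : ℤ) * t ≤ Fintype.card ι * t := by linarith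
  exact_mod_cast le_of_mul_le_mul_right this ht

theorem MonoidHom.sum_comp_of_surjective {G H M : Type*} [Group G] [Group H] [Fintype G]
    [Fintype H] [AddCommMonoid M] (f : G →* H) (hf : Function.Surjective f) (F : H → M) :
    ∑ g, F (f g) = (Fintype.card G / Fintype.card H) • ∑ h, F h := by
  classical
  have hfiber : ∀ h, #{g | f g = h} = #{g | f g = 1} := fun h ↦
    card_fiber_eq_of_mem_range f (hf h) (hf 1)
  have hcard : Fintype.card G = Fintype.card H * #{g | f g = 1} := by
    rw [← card_univ, card_eq_sum_card_fiberwise (f := f) (t := univ) fun _ _ ↦ mem_univ _]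
    simp [hfiber]
  rw [← sum_fiberwise' univ f F, smul_sum, hcard,
    Nat.mul_div_cancel_left _ (Fintype.card_pos (α := H))]
  simp [hfiber]

namespace IsPrimitiveRoot

variable {R : Type*} [CommRing R] [IsDomain R] {ζ : R} {k : ℕ}

theorem sum_nthRootsFinset_one (hζ : IsPrimitiveRoot ζ k) :
    ∑ x ∈ nthRootsFinset k (1 : R), x = if k = 1 then 1 else 0 := by
  classical
  obtain rfl | hk := Nat.eq_zero_or_pos k
  · simp
  have hinj : Set.InjOn (ζ ^ ·) (range k) := fun a ha b hb ↦
    hζ.pow_inj (mem_range.mp ha) (mem_range.mp hb)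
  have himage : (range k).image (ζ ^ ·) = nthRootsFinset k (1 : R) := by
    refine eq_of_subset_of_card_le (fun x hx ↦ ?_) ?_
    · obtain ⟨i, -, rfl⟩ := mem_image.mp hx
      rw [Polynomial.mem_nthRootsFinset hk, ← pow_mul, mul_comm, pow_mul, hζ.pow_eq_one, one_pow]
    · rw [hζ.card_nthRootsFinset, card_image_of_injOn hinj, card_range]
  rw [← himage, sum_image hinj]
  split_ifs with h1
  · simp [h1]
  · exact hζ.geom_sum_eq_zero (by omega)

theorem sum_primitiveRoots_eq_moebius (hζ : IsPrimitiveRoot ζ k) (hk : 0 < k) :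
    ∑ x ∈ primitiveRoots k R, x = ArithmeticFunction.moebius k := by
  classical
  have hdivisors : ∀ d > 0, ∑ e ∈ d.divisors, ∑ x ∈ primitiveRoots e R, x
      = ∑ x ∈ nthRootsFinset d (1 : R), x := fun d _ ↦ by
    rw [nthRoots_one_eq_biUnion_primitiveRoots, sum_biUnion fun a _ b _ hab ↦ disjoint hab]
  rw [← (ArithmeticFunction.sum_eq_iff_sum_mul_moebius_eq.mp hdivisors) k hk,
    sum_eq_single (k, 1)]
  · rw [IsPrimitiveRoot.one.sum_nthRootsFinset_one]
    simp
  · rintro ⟨a, b⟩ hab hne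
    obtain ⟨rfl, -⟩ := Nat.mem_divisorsAntidiagonal.mp hab
    have hb : b ≠ 1 := by rintro rfl; exact hne (by simp)
    rw [(hζ.pow hk rfl).sum_nthRootsFinset_one, if_neg hb, mul_zero]
  · simp [hk.ne']

theorem sum_units_pow_val_eq_sum_primitiveRoots (hζ : IsPrimitiveRoot ζ k) [NeZero k] :
    ∑ u : (ZMod k)ˣ, ζ ^ (u : ZMod k).val = ∑ x ∈ primitiveRoots k R, x := by
  refine sum_bij (fun u _ ↦ ζ ^ (u : ZMod k).val) (fun u _ ↦ ?_) (fun u _ v _ huv ↦ ?_)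
    (fun x hx ↦ ?_) fun _ _ ↦ rfl
  · rw [mem_primitiveRoots (NeZero.pos k)]
    exact hζ.pow_of_coprime _ (ZMod.val_coe_unit_coprime u)
  · exact Units.ext <| ZMod.val_injective k <| hζ.pow_inj (ZMod.val_lt _) (ZMod.val_lt _) huv
  · rw [mem_primitiveRoots (NeZero.pos k), hζ.isPrimitiveRoot_iff] at hx
    obtain ⟨i, hik, hcop, rfl⟩ := hx
    exact ⟨ZMod.unitOfCoprime i hcop, mem_univ _, by
      rw [ZMod.coe_unitOfCoprime, ZMod.val_natCast, Nat.mod_eq_of_lt hik]⟩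

end IsPrimitiveRoot

theorem sum_units_pow_val_eq_totient_div_mul_moebius {R : Type*} [CommRing R] [IsDomain R]
    {η : R} {k : ℕ} [NeZero k] (hη : η ^ k = 1) :
    ∑ u : (ZMod k)ˣ, η ^ (u : ZMod k).val
      = ((k.totient / (orderOf η).totient : ℕ) : R) *
          ArithmeticFunction.moebius (orderOf η) := by
  have hdvd : orderOf η ∣ k := orderOf_dvd_of_pow_eq_one hη
  have : NeZero (orderOf η) := ⟨fun h ↦ NeZero.ne k (Nat.eq_zero_of_zero_dvd (h ▸ hdvd))⟩
  have hcast : ∀ u : (ZMod k)ˣ,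
      η ^ (u : ZMod k).val = η ^ (ZMod.unitsMap hdvd u : ZMod (orderOf η)).val := fun u ↦ by
    refine pow_eq_pow_of_modEq ?_ (pow_orderOf_eq_one η)
    rw [← ZMod.natCast_eq_natCast_iff, ZMod.natCast_val, ZMod.natCast_val, ZMod.cast_id,
      ZMod.unitsMap_val]
  simp_rw [hcast]
  rw [(ZMod.unitsMap hdvd).sum_comp_of_surjective (ZMod.unitsMap_surjective hdvd)
      (fun w ↦ η ^ (w : ZMod (orderOf η)).val),
    ZMod.card_units_eq_totient, ZMod.card_units_eq_totient,
    (IsPrimitiveRoot.orderOf η).sum_units_pow_val_eq_sum_primitiveRoots,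
    (IsPrimitiveRoot.orderOf η).sum_primitiveRoots_eq_moebius (NeZero.pos _), nsmul_eq_mul]

namespace IsPrimitiveRoot

theorem sum_pow_eq_zero_of_sum_pow_eq_zero {K : Type*} [Field K] [CharZero K]
    {ζ ζ' : K} {k : ℕ} (hk : 0 < k) (hζ : IsPrimitiveRoot ζ k) (hζ' : IsPrimitiveRoot ζ' k)
    {ι : Type*} (s : Finset ι) (e : ι → ℕ) (h : ∑ i ∈ s, ζ ^ e i = 0) :
    ∑ i ∈ s, ζ' ^ e i = 0 := by
  have haeval : ∀ z : K, aeval z (∑ i ∈ s, X ^ e i : ℚ[X]) = ∑ i ∈ s, z ^ e i := by simp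
  have hdvd := minpoly.dvd ℚ ζ ((haeval ζ).trans h)
  rw [← cyclotomic_eq_minpoly_rat hζ hk, cyclotomic_eq_minpoly_rat hζ' hk] at hdvd
  rw [← haeval]
  exact aeval_eq_zero_of_dvd_aeval_eq_zero hdvd (minpoly.aeval ℚ ζ')

theorem card_filter_eq_zero_mul_minFac_le {K : Type*} [Field K] [CharZero K]
    {ζ : K} {k : ℕ} [NeZero k] (hζ : IsPrimitiveRoot ζ k) {ι : Type*} [Fintype ι]
    (c : ι → ZMod k) (h : ∑ i, ζ ^ (c i).val = 0) :
    #{i | c i = 0} * k.minFac ≤ Fintype.card ι := by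
  have hroot : ∀ v : ZMod k, (ζ ^ v.val) ^ k = 1 := fun v ↦ by
    rw [← pow_mul, mul_comm, pow_mul, hζ.pow_eq_one, one_pow]
  set r : ZMod k → ℤ := fun v ↦ (k.totient / (orderOf (ζ ^ v.val)).totient : ℕ) *
    ArithmeticFunction.moebius (orderOf (ζ ^ v.val)) with hr_def
  have hr : ∀ v, ∑ u : (ZMod k)ˣ, (ζ ^ v.val) ^ (u : ZMod k).val = (r v : K) := fun v ↦ by
    rw [sum_units_pow_val_eq_totient_div_mul_moebius (hroot v)]
    simp only [hr_def, Int.cast_mul, Int.cast_natCast]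
  have hsum : ∑ i, r (c i) = 0 := by
    have : ∑ i, (r (c i) : K) = 0 := by
      simp_rw [← hr, ← pow_mul, mul_comm (c _).val, pow_mul]
      rw [sum_comm]
      exact sum_eq_zero fun u _ ↦ hζ.sum_pow_eq_zero_of_sum_pow_eq_zero (NeZero.pos k)
        (hζ.pow_of_coprime _ (ZMod.val_coe_unit_coprime u)) _ _ h
    exact_mod_cast this
  refine card_mul_le_of_sum_eq_zero _ (fun i ↦ r (c i)) (t := k.totient)
    (by exact_mod_cast Nat.totient_pos.mpr (NeZero.pos k)) hsum
    (fun i hi ↦ by simp [(mem_filter.mp hi).2, hr_def]) fun i hi ↦ ?_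
  have hne : orderOf (ζ ^ (c i).val) ≠ 1 := by
    rw [Ne, orderOf_eq_one_iff, hζ.pow_eq_one_iff_dvd]
    intro hdvd
    exact hi (mem_filter.mpr ⟨mem_univ _, (ZMod.val_eq_zero _).mp
      (Nat.eq_zero_of_dvd_of_lt hdvd (ZMod.val_lt _))⟩)
  exact Nat.neg_totient_le_minFac_sub_one_mul_totient_div_mul_moebius (NeZero.ne k)
    (orderOf_dvd_of_pow_eq_one (hroot _)) hne

theorem pow_val_mul_star_pow_val {ζ : ℂ} {k : ℕ} [NeZero k]
    (hζ : IsPrimitiveRoot ζ k) (a b : ZMod k) :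
    ζ ^ a.val * star (ζ ^ b.val) = ζ ^ (a - b).val := by
  have hb : ζ ^ b.val ≠ 0 := pow_ne_zero _ (hζ.ne_zero (NeZero.ne k))
  have hstar : star (ζ ^ b.val) = (ζ ^ b.val)⁻¹ := by
    refine (Complex.inv_eq_conj ?_).symm
    rw [norm_pow, hζ.norm'_eq_one (NeZero.ne k), one_pow]
  have hsplit : ζ ^ a.val = ζ ^ (a - b).val * ζ ^ b.val := by
    rw [← pow_add]
    refine pow_eq_pow_of_modEq ?_ hζ.pow_eq_one
    rw [← ZMod.natCast_eq_natCast_iff]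
    simp
  rw [hstar, hsplit, mul_inv_cancel_right₀ hb]

end IsPrimitiveRoot

theorem stmt10_general (n k : ℕ) (hk : 2 < k) (ζ : ℂ)
    (hζ : IsPrimitiveRoot ζ k) (A : Matrix (Fin n) (Fin n) (ZMod k))
    (hBH : ∀ i j, (∑ l, ζ ^ (A i l).val * star (ζ ^ (A j l).val))
        = if i = j then (n : ℂ) else 0) :
    ∀ i j : Fin n, i ≠ j →
      (n : ℝ) - (n : ℝ) / (k.minFac : ℝ) ≤ (hammingDist (A i) (A j) : ℝ) := by
  intro i j hij
  have : NeZero k := ⟨by omega⟩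
  have hvanish : ∑ l, ζ ^ (A i l - A j l).val = 0 := by
    simpa only [hζ.pow_val_mul_star_pow_val, if_neg hij] using hBH i j
  have hagree := hζ.card_filter_eq_zero_mul_minFac_le _ hvanish
  rw [Fintype.card_fin] at hagree
  have hdist : hammingDist (A i) (A j) + #{l | A i l - A j l = 0} = n := by
    simp_rw [sub_eq_zero]
    rw [hammingDist, add_comm, card_filter_add_card_filter_not, card_univ,
      Fintype.card_fin]
  calc (n : ℝ) - n / k.minFac ≤ n - #{l | A i l - A j l = 0} := by
        gcongr
        rw [le_div_iff₀ (by exact_mod_cast k.minFac_pos)]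
        exact_mod_cast hagree
    _ = hammingDist (A i) (A j) := by
        rw [sub_eq_iff_eq_add]
        exact_mod_cast hdist.symm

theorem stmt10 (n k : ℕ) (hk : 2 < k) (hn : 0 < n) (ζ : ℂ)
    (hζ : IsPrimitiveRoot ζ k) (A : Matrix (Fin n) (Fin n) (ZMod k))
    (hBH : ∀ i j, (∑ l, ζ ^ (A i l).val * star (ζ ^ (A j l).val))
        = if i = j then (n : ℂ) else 0)
    (hnorm : ∀ i j : Fin n, A i ⟨0, hn⟩ = 0 ∧ A ⟨0, hn⟩ j = 0) :
    ∀ i j : Fin n, i ≠ j →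
      (n : ℝ) - (n : ℝ) / (k.minFac : ℝ) ≤ (hammingDist (A i) (A j) : ℝ) :=
  stmt10_general n k hk ζ hζ A hBH
end

section
/- Let p be a prime and k ≥ 2. Define w₁ : ℤ_{p^k} → ℝ by w₁(0) = 0, w₁(u) = p^{k-1} if u is a nonzero multiple of p^{k-1}, and w₁(u) = p^{k-1} − p^{k-2} otherwise. Then w₁ is a homogeneous weight on ℤ_{p^k} with average value γ = p^{k-2}(p−1): that is, w₁(0)=0, w₁(x)=w₁(y) whenever x and y generate the same ideal of ℤ_{p^k}, and for every nonzero x, the sum of w₁ over the ideal generated by x equals γ times the cardinality of that ideal. -/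
open scoped Classical

lemma gcd_dvd_val_of_dvd (n : ℕ) [NeZero n] {x y : ZMod n} (h : x ∣ y) :
    Nat.gcd x.val n ∣ y.val := by
  obtain ⟨c, rfl⟩ := h
  rw [ZMod.val_mul]
  exact (Nat.dvd_mod_iff (Nat.gcd_dvd_right _ _)).mpr
    (Dvd.dvd.mul_right (Nat.gcd_dvd_left _ _) _)

lemma dvd_of_gcd_dvd_val (n : ℕ) [NeZero n] {x y : ZMod n}
    (h : Nat.gcd x.val n ∣ y.val) : x ∣ y := by
  have h1 : x ∣ (Nat.gcd x.val n : ZMod n) := by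
    refine ⟨(Nat.gcdA x.val n : ZMod n), ?_⟩
    have hb := Nat.gcd_eq_gcd_ab x.val n
    have : ((Nat.gcd x.val n : ℤ) : ZMod n) = (((x.val : ℤ) * Nat.gcdA x.val n + n * Nat.gcdB x.val n : ℤ) : ZMod n) := by
      exact_mod_cast congrArg (fun z : ℤ => (z : ZMod n)) hb
    push_cast at this
    simpa [ZMod.natCast_self, ZMod.natCast_val, ZMod.cast_id] using this
  have h2 : (Nat.gcd x.val n : ZMod n) ∣ y := by
    obtain ⟨m, hm⟩ := h
    refine ⟨(m : ZMod n), ?_⟩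
    have : ((y.val : ℕ) : ZMod n) = y := by simp [ZMod.natCast_val, ZMod.cast_id]
    rw [← this, hm]
    push_cast
    ring
  exact h1.trans h2

lemma card_filter_dvd (n : ℕ) [NeZero n] (d : ℕ) (hd : 0 < d) (hdn : d ∣ n) :
    (Finset.univ.filter (fun y : ZMod n => d ∣ y.val)).card = n / d := by
  rw [← Finset.card_range (n / d)]
  apply Finset.card_bij' (fun (y : ZMod n) _ => y.val / d)
    (fun (i : ℕ) _ => ((i * d : ℕ) : ZMod n))
  · intro y hy
    simp only [Finset.mem_filter] at hy
    exact Finset.mem_range.mpr (Nat.div_lt_div_of_lt_of_dvd hdn (ZMod.val_lt y))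
  · intro i hi
    have hi' := Finset.mem_range.mp hi
    have hlt : i * d < n := by
      calc i * d < (n / d) * d := (Nat.mul_lt_mul_right hd).mpr hi'
      _ = n := Nat.div_mul_cancel hdn
    simp only [Finset.mem_filter, Finset.mem_univ, true_and]
    rw [ZMod.val_natCast_of_lt hlt]
    exact Dvd.intro_left i rfl
  · intro y hy
    simp only [Finset.mem_filter, Finset.mem_univ, true_and] at hy
    rw [Nat.div_mul_cancel hy]
    simp [ZMod.natCast_val, ZMod.cast_id]
  · intro i hi
    have hi' := Finset.mem_range.mp hi
    have hlt : i * d < n := by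
      calc i * d < (n / d) * d := (Nat.mul_lt_mul_right hd).mpr hi'
      _ = n := Nat.div_mul_cancel hdn
    rw [ZMod.val_natCast_of_lt hlt, Nat.mul_div_cancel _ hd]

/-- The homogeneous weight `w₁` on `ℤ_{p^k}`. -/
noncomputable def w1 (p k : ℕ) [NeZero (p ^ k)] (u : ZMod (p ^ k)) : ℝ :=
  if u = 0 then 0
  else if p ^ (k - 1) ∣ u.val then (p : ℝ) ^ (k - 1)
  else (p : ℝ) ^ (k - 1) - (p : ℝ) ^ (k - 2)

theorem stmt11 (p k : ℕ) (hp : p.Prime) (hk : 2 ≤ k) [NeZero (p ^ k)] :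
    w1 p k 0 = 0 ∧
    (∀ x y : ZMod (p ^ k),
        Ideal.span {x} = Ideal.span {y} → w1 p k x = w1 p k y) ∧
    (∀ x : ZMod (p ^ k), x ≠ 0 →
        ∑ y ∈ Finset.univ.filter (fun y => y ∈ Ideal.span {x}), w1 p k y
          = (p : ℝ) ^ (k - 2) * (p - 1) *
              (Finset.univ.filter (fun y => y ∈ Ideal.span ({x} : Set (ZMod (p ^ k))))).card) := by
  have hppos : 0 < p := hp.pos
  refine ⟨by simp [w1], ?_, ?_⟩
  · intro x y h
    have hxy : x ∣ y := by
      have : y ∈ Ideal.span {x} := by rw [h]; exact Ideal.mem_span_singleton_self y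
      exact Ideal.mem_span_singleton.mp this
    have hyx : y ∣ x := by
      have : x ∈ Ideal.span {y} := by rw [← h]; exact Ideal.mem_span_singleton_self x
      exact Ideal.mem_span_singleton.mp this
    have hpk : ∀ {a b : ZMod (p ^ k)}, a ∣ b → p ^ (k - 1) ∣ a.val → p ^ (k - 1) ∣ b.val := by
      intro a b hab ha
      exact (Nat.dvd_gcd ha (pow_dvd_pow p (by omega))).trans (gcd_dvd_val_of_dvd _ hab)
    by_cases hx0 : x = 0
    · have hy0 : y = 0 := zero_dvd_iff.mp (hx0 ▸ hxy)
      simp [w1, hx0, hy0]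
    · have hy0 : y ≠ 0 := fun hy => hx0 (zero_dvd_iff.mp (hy ▸ hyx))
      by_cases hP : p ^ (k - 1) ∣ x.val
      · have hPy := hpk hxy hP
        simp [w1, hx0, hy0, hP, hPy]
      · have hPy : ¬ p ^ (k - 1) ∣ y.val := fun hy => hP (hpk hyx hy)
        simp [w1, hx0, hy0, hP, hPy]
  · intro x hx
    set d := Nat.gcd x.val (p ^ k) with hd
    have hd0 : 0 < d := Nat.gcd_pos_of_pos_right _ (pow_pos hppos k)
    have hdn : d ∣ p ^ k := Nat.gcd_dvd_right _ _
    have hxval : x.val ≠ 0 := fun h => hx (by rwa [← ZMod.val_eq_zero])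
    have hdk1 : d ∣ p ^ (k - 1) := by
      obtain ⟨j, hj, hdj⟩ := (Nat.dvd_prime_pow hp).mp hdn
      have hdx : d ≤ x.val := Nat.le_of_dvd (Nat.pos_of_ne_zero hxval) (Nat.gcd_dvd_left _ _)
      have : d ≠ p ^ k := by
        intro hdk
        have := ZMod.val_lt x
        omega
      have hjk : j ≤ k - 1 := by
        rcases Nat.lt_or_ge j k with h' | h'
        · omega
        · exfalso; exact this (by rw [hdj]; congr 1; omega)
      rw [hdj]
      exact pow_dvd_pow p hjk
    have hmem : ∀ y : ZMod (p ^ k), y ∈ Ideal.span {x} ↔ d ∣ y.val := by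
      intro y
      rw [Ideal.mem_span_singleton]
      exact ⟨gcd_dvd_val_of_dvd _, dvd_of_gcd_dvd_val _⟩
    have hfilter : (Finset.univ.filter (fun y => y ∈ Ideal.span {x}))
        = Finset.univ.filter (fun y : ZMod (p ^ k) => d ∣ y.val) :=
      Finset.filter_congr (fun y _ => by simp [hmem])
    rw [hfilter]
    set M := Finset.univ.filter (fun y : ZMod (p ^ k) => d ∣ y.val) with hM
    set P := fun y : ZMod (p ^ k) => p ^ (k - 1) ∣ y.val with hP
    have hAM : M.filter P = Finset.univ.filter P := by
      rw [hM, Finset.filter_filter]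
      exact Finset.filter_congr (fun y _ => ⟨fun h => h.2, fun h => ⟨hdk1.trans h, h⟩⟩)
    have cardA : (Finset.univ.filter P).card = p := by
      simp only [hP]
      rw [card_filter_dvd (p ^ k) (p ^ (k - 1)) (pow_pos hppos _) (pow_dvd_pow p (by omega))]
      rw [Nat.pow_div (by omega) hppos, show k - (k - 1) = 1 by omega, pow_one]
    have hsplit := Finset.card_filter_add_card_filter_not (s := M) (p := P)
    rw [hAM, cardA] at hsplit
    have hpleM : p ≤ M.card := by omega
    have cardB : (M.filter (fun y => ¬ P y)).card = M.card - p := by omega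
    rw [← Finset.sum_filter_add_sum_filter_not M P]
    have hSA : ∑ y ∈ M.filter P, w1 p k y = (p : ℝ) ^ (k - 1) * p - (p : ℝ) ^ (k - 1) := by
      rw [hAM]
      have : ∀ y ∈ Finset.univ.filter P, w1 p k y
          = ((p : ℝ) ^ (k - 1) - if y = 0 then (p : ℝ) ^ (k - 1) else 0) := by
        intro y hy
        have hPy : p ^ (k - 1) ∣ y.val := (Finset.mem_filter.mp hy).2
        by_cases h0 : y = 0 <;> simp [w1, h0, hPy]
      rw [Finset.sum_congr rfl this, Finset.sum_sub_distrib, Finset.sum_const,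
        Finset.sum_ite_eq' (Finset.univ.filter P) (0 : ZMod (p ^ k)) (fun _ => (p : ℝ) ^ (k - 1))]
      have h0mem : (0 : ZMod (p ^ k)) ∈ Finset.univ.filter P := by
        simp [hP, ZMod.val_zero]
      rw [if_pos h0mem, cardA, nsmul_eq_mul]
      ring
    have hSB : ∑ y ∈ M.filter (fun y => ¬ P y), w1 p k y
        = ((p : ℝ) ^ (k - 1) - (p : ℝ) ^ (k - 2)) * ((M.card : ℝ) - p) := by
      have : ∀ y ∈ M.filter (fun y => ¬ P y), w1 p k y
          = (p : ℝ) ^ (k - 1) - (p : ℝ) ^ (k - 2) := by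
        intro y hy
        have hPy : ¬ p ^ (k - 1) ∣ y.val := (Finset.mem_filter.mp hy).2
        have hy0 : y ≠ 0 := by
          intro h0
          exact hPy (by simp [h0, ZMod.val_zero])
        simp [w1, hy0, hPy]
      rw [Finset.sum_congr rfl this, Finset.sum_const, cardB, nsmul_eq_mul,
        Nat.cast_sub hpleM]
      ring
    rw [hSA, hSB]
    have hpow : (p : ℝ) ^ (k - 1) = (p : ℝ) ^ (k - 2) * p := by
      rw [← pow_succ]
      congr 1
      omega
    rw [hpow]
    ring
end

section
/- Let p > 2 be prime, k ≥ 1, and define the Gray map G₂ : ℤ_{p^k} → ℤ_p^{p^{k-1}} by: for 0 ≤ u ≤ p^{k-1}, G₂(u) has 1 in the first u coordinates and 0 elsewhere; for u = q·p^{k-1} + r with 0 ≤ r < p^{k-1} and u > p^{k-1}, G₂(u) = (q,q,...,q) + G₂(r) coordinatewise. Then the Hamming weight of G₂(u) equals w₂(u), where w₂(u) = u for u ≤ p^{k-1}, w₂(u) = p^{k-1} for p^{k-1} ≤ u ≤ p^k − p^{k-1}, and w₂(u) = p^k − u for p^k − p^{k-1} < u ≤ p^k − 1. -/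
/-- The generalized Gray map `G₂ : ℤ_{p^k} → ℤ_p^{p^{k-1}}`: for `0 ≤ u ≤ p^{k-1}` it is `1`
in the first `u` coordinates and `0` elsewhere, and `G₂(q·p^{k-1} + r) = (q,…,q) + G₂(r)`. -/
def G2 (p k : ℕ) [NeZero (p ^ k)] (u : ZMod (p ^ k)) : Fin (p ^ (k - 1)) → ZMod p :=
  fun t => ((u.val / p ^ (k - 1) : ℕ) : ZMod p) +
    if (t : ℕ) < u.val % p ^ (k - 1) then 1 else 0

/-- The non-homogeneous weight `w₂` on `ℤ_{p^k}` (representatives in `{0,…,p^k−1}`). -/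
def w2 (p k : ℕ) [NeZero (p ^ k)] (u : ZMod (p ^ k)) : ℤ :=
  if u.val ≤ p ^ (k - 1) then (u.val : ℤ)
  else if u.val ≤ p ^ k - p ^ (k - 1) then (p : ℤ) ^ (k - 1)
  else (p : ℤ) ^ k - (u.val : ℤ)

lemma card_filter_val_lt (n r : ℕ) (h : r ≤ n) :
    (Finset.univ.filter fun t : Fin n => (t : ℕ) < r).card = r := by
  have he : (Finset.univ.filter fun t : Fin n => (t : ℕ) < r) =
      (Finset.range r).attachFin (fun m hm => lt_of_lt_of_le (Finset.mem_range.mp hm) h) := by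
    ext t
    simp [Finset.mem_attachFin]
  rw [he, Finset.card_attachFin, Finset.card_range]

theorem stmt13 (p k : ℕ) (hp : p.Prime) (hodd : 2 < p) (hk : 1 ≤ k) [NeZero (p ^ k)]
    (u : ZMod (p ^ k)) :
    (hammingNorm (G2 p k u) : ℤ) = w2 p k u := by
  classical
  haveI : Fact p.Prime := ⟨hp⟩
  set n := p ^ (k - 1) with hn
  have hn0 : 0 < n := pow_pos hp.pos _
  have hpk : p ^ k = p * n := by
    rw [hn, ← pow_succ']
    congr 1
    omega
  have hu : u.val < p * n := by rw [← hpk]; exact u.val_lt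
  set q := u.val / n with hq
  set r := u.val % n with hr
  have hqp : q < p := Nat.div_lt_of_lt_mul (by rwa [mul_comm])
  have hrn : r < n := Nat.mod_lt _ hn0
  have huval : n * q + r = u.val := Nat.div_add_mod u.val n
  have hG : ∀ t : Fin n, G2 p k u t = (q : ZMod p) + if (t : ℕ) < r then 1 else 0 := by
    intro t; rfl
  have hcastk : ((p : ℤ)) ^ (k - 1) = (n : ℤ) := by rw [hn]; push_cast; ring
  have hcastk2 : ((p : ℤ)) ^ k = ((p * n : ℕ) : ℤ) := by rw [← hpk]; push_cast; ring
  -- case split on q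
  rcases eq_or_ne q 0 with hq0 | hq0
  · -- q = 0 : weight is r, u.val = r
    have hval : u.val = r := by rw [← huval, hq0, Nat.mul_zero, Nat.zero_add]
    have hcard : hammingNorm (G2 p k u) = r := by
      unfold hammingNorm
      rw [← card_filter_val_lt n r hrn.le]
      congr 1
      ext t
      simp only [Finset.mem_filter, Finset.mem_univ, true_and, hG, hq0, Nat.cast_zero, zero_add]
      split_ifs with h
      · simp [h]
      · simp [h]
    rw [hcard]
    unfold w2
    rw [hcastk, hcastk2]
    clear hG
    clear_value n q r
    split_ifs with h1 h2 <;> omega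
  · rcases eq_or_ne (q + 1) p with hq1 | hq1
    · -- q = p - 1 : weight is n - r
      have hqcast : (q : ZMod p) = -1 := by
        have : ((q : ZMod p)) + 1 = 0 := by
          rw [show ((q : ZMod p)) + 1 = ((q + 1 : ℕ) : ZMod p) by push_cast; ring, hq1,
            ZMod.natCast_self]
        exact eq_neg_of_add_eq_zero_left this
      have hcard : hammingNorm (G2 p k u) = n - r := by
        unfold hammingNorm
        have he : (Finset.univ.filter fun t : Fin n => G2 p k u t ≠ 0) =
            Finset.univ \ (Finset.univ.filter fun t : Fin n => (t : ℕ) < r) := by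
          ext t
          simp only [Finset.mem_filter, Finset.mem_univ, true_and, Finset.mem_sdiff, hG, hqcast]
          split_ifs with h
          · simp [h]
          · simp [h]
        rw [he, Finset.card_sdiff_of_subset (Finset.filter_subset _ _), card_filter_val_lt n r hrn.le,
          Finset.card_univ, Fintype.card_fin]
      rw [hcard]
      have hq' : q = p - 1 := by omega
      rw [hq'] at huval
      have h2 : n * (p - 1) + n = p * n := by
        have hpp : p - 1 + 1 = p := by omega
        calc n * (p - 1) + n = n * (p - 1 + 1) := by ring
        _ = p * n := by rw [hpp]; ring
      have hval : u.val + n = p * n + r := by omega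
      have h3n : 3 * n ≤ p * n := Nat.mul_le_mul_right n hodd
      unfold w2
      rw [hcastk, hcastk2]
      clear hG
      clear_value n q r
      split_ifs with h1 h2 <;> omega
    · -- 0 < q < p - 1 : weight is n
      have hqnz : (q : ZMod p) ≠ 0 := by
        rw [Ne, ZMod.natCast_eq_zero_iff]
        intro hdvd
        exact hq0 (Nat.eq_zero_of_dvd_of_lt hdvd hqp)
      have hq1nz : ((q : ZMod p)) + 1 ≠ 0 := by
        rw [show ((q : ZMod p)) + 1 = ((q + 1 : ℕ) : ZMod p) by push_cast; ring]
        rw [Ne, ZMod.natCast_eq_zero_iff]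
        intro hdvd
        exact Nat.succ_ne_zero q (Nat.eq_zero_of_dvd_of_lt hdvd (by omega))
      have hcard : hammingNorm (G2 p k u) = n := by
        unfold hammingNorm
        have he : (Finset.univ.filter fun t : Fin n => G2 p k u t ≠ 0) = Finset.univ := by
          ext t
          simp only [Finset.mem_filter, Finset.mem_univ, true_and, iff_true, hG]
          split_ifs with h
          · exact hq1nz
          · simpa using hqnz
        rw [he, Finset.card_univ, Fintype.card_fin]
      rw [hcard]
      have hge : n ≤ u.val := huval ▸
        le_trans (Nat.le_mul_of_pos_right n (Nat.pos_of_ne_zero hq0)) (Nat.le_add_right _ r)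
      have hle : u.val ≤ p * n - n := by
        have h1 : n * q ≤ n * (p - 2) := Nat.mul_le_mul_left n (by omega)
        have h2 : n * (p - 2) + 2 * n = p * n := by
          have hp2 : p - 2 + 2 = p := by omega
          calc n * (p - 2) + 2 * n = n * (p - 2 + 2) := by ring
          _ = p * n := by rw [hp2]; ring
        omega
      unfold w2
      rw [hcastk, hcastk2]
      clear hG
      clear_value n q r
      split_ifs with h1 h2 <;> omega
end

section
/- Let p > 2 be prime, k ≥ 1, and let m, n be nonzero elements of {1,...,p^k−1} with m − n = (p−1)p^{k-1} and m > n, where both m, n < p^{k-1} or > (p−1)p^{k-1} as integers. Then the total number of zero coordinates in G₂(m) and G₂(n) combined equals p^{k-1}. -/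
lemma card_filter_fin_lt (N n : ℕ) (h : n ≤ N) :
    (Finset.univ.filter (fun t : Fin N => (t:ℕ) < n)).card = n := by
  have : (Finset.univ.filter (fun t : Fin N => (t:ℕ) < n))
      = Finset.image (fun i : Fin n => Fin.castLE h i) Finset.univ := by
    ext t
    simp only [Finset.mem_filter, Finset.mem_univ, true_and, Finset.mem_image]
    constructor
    · intro ht; exact ⟨⟨t, ht⟩, rfl⟩
    · rintro ⟨i, rfl⟩; exact i.isLt
  rw [this, Finset.card_image_of_injective _ (Fin.castLE_injective h)]
  simp

theorem stmt14 (p k : ℕ) (hp : p.Prime) (hodd : 2 < p) (hk : 1 ≤ k) [NeZero (p ^ k)]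
    (m n : ℕ) (hm1 : 1 ≤ n) (hm2 : m ≤ p ^ k - 1) (hmn : m = n + (p - 1) * p ^ (k - 1))
    (hmr : m < p ^ (k - 1) ∨ (p - 1) * p ^ (k - 1) < m)
    (hnr : n < p ^ (k - 1) ∨ (p - 1) * p ^ (k - 1) < n) :
    (Finset.univ.filter (fun t => G2 p k (m : ZMod (p ^ k)) t = 0)).card +
      (Finset.univ.filter (fun t => G2 p k (n : ZMod (p ^ k)) t = 0)).card
        = p ^ (k - 1) := by
  have hp1 : 1 ≤ p := hp.one_lt.le
  have hpow_pos : 0 < p ^ (k - 1) := pow_pos hp.pos _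
  have hpk : p ^ k = p ^ (k - 1) + (p - 1) * p ^ (k - 1) := by
    have : p ^ k = p * p ^ (k - 1) := by
      conv_lhs => rw [show k = (k - 1) + 1 from (Nat.succ_pred_eq_of_pos hk).symm]
      ring
    have h2 : p ^ (k - 1) ≤ p * p ^ (k - 1) := Nat.le_mul_of_pos_left _ hp.pos
    rw [this, Nat.sub_mul, one_mul]
    omega
  have hnlt : n < p ^ (k - 1) := by omega
  have hmlt : m < p ^ k := by omega
  have hnltk : n < p ^ k := by omega
  have hmval : (↑m : ZMod (p ^ k)).val = m := ZMod.val_natCast_of_lt hmlt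
  have hnval : (↑n : ZMod (p ^ k)).val = n := ZMod.val_natCast_of_lt hnltk
  have hmdiv : m / p ^ (k - 1) = p - 1 := by
    rw [hmn, Nat.add_mul_div_right _ _ hpow_pos, Nat.div_eq_of_lt hnlt, zero_add]
  have hmmod : m % p ^ (k - 1) = n := by
    rw [hmn, Nat.add_mul_mod_self_right, Nat.mod_eq_of_lt hnlt]
  have hndiv : n / p ^ (k - 1) = 0 := Nat.div_eq_of_lt hnlt
  have hnmod : n % p ^ (k - 1) = n := Nat.mod_eq_of_lt hnlt
  have hcast : ((p - 1 : ℕ) : ZMod p) = -1 := by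
    have : ((p - 1 : ℕ) : ZMod p) = (p : ZMod p) - 1 := by
      push_cast [Nat.cast_sub hp1]; ring
    rw [this, ZMod.natCast_self, zero_sub]
  have hone : (1 : ZMod p) ≠ 0 := by
    haveI : Fact p.Prime := ⟨hp⟩
    exact one_ne_zero
  have hGm : ∀ t : Fin (p ^ (k - 1)),
      (G2 p k (↑m) t = 0 ↔ (t : ℕ) < n) := by
    intro t
    simp only [G2, hmval, hmdiv, hmmod, hcast]
    by_cases ht : (t : ℕ) < n <;> simp [ht, hone]
  have hGn : ∀ t : Fin (p ^ (k - 1)),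
      (G2 p k (↑n) t = 0 ↔ ¬ (t : ℕ) < n) := by
    intro t
    simp only [G2, hnval, hndiv, hnmod, Nat.cast_zero, zero_add]
    by_cases ht : (t : ℕ) < n <;> simp [ht, hone]
  have e1 : (Finset.univ.filter (fun t => G2 p k (↑m : ZMod (p ^ k)) t = 0)).card = n := by
    rw [show (Finset.univ.filter (fun t => G2 p k (↑m : ZMod (p ^ k)) t = 0))
        = Finset.univ.filter (fun t : Fin (p ^ (k - 1)) => (t : ℕ) < n) from
      Finset.filter_congr fun t _ => by simpa using hGm t]
    exact card_filter_fin_lt _ _ hnlt.le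
  have e2 : (Finset.univ.filter (fun t => G2 p k (↑n : ZMod (p ^ k)) t = 0)).card
      = p ^ (k - 1) - n := by
    rw [show (Finset.univ.filter (fun t => G2 p k (↑n : ZMod (p ^ k)) t = 0))
        = Finset.univ.filter (fun t : Fin (p ^ (k - 1)) => ¬ (t : ℕ) < n) from
      Finset.filter_congr fun t _ => by simpa using hGn t]
    rw [Finset.filter_not, Finset.card_sdiff_of_subset (Finset.filter_subset _ _),
      card_filter_fin_lt _ _ hnlt.le]
    simp
  rw [e1, e2]
  omega
end

section
/- Let p > 2 be prime and k ≥ 2, and fix i ∈ {1,...,k−1}. For j ≥ 0 let N_j denote the total number of zero coordinates among the Gray images G₂(p^i + j), G₂(2p^i + j), ..., G₂(p^k + j) (arguments taken mod p^k). Then N_j is independent of j: N_m = N_n for all m, n ≥ 0. -/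
open Finset

lemma Nat.add_sub_one_sub_div (v P t : ℕ) (ht : t < P) :
    (v + (P - 1 - t)) / P = v / P + if t < v % P then 1 else 0 := by
  have hr : v % P < P := Nat.mod_lt _ (by omega)
  have hcarry : (v % P + (P - 1 - t)) / P = if t < v % P then 1 else 0 := by
    split_ifs with h
    · exact Nat.div_eq_of_lt_le (by omega) (by omega)
    · exact Nat.div_eq_of_lt (by omega)
  have hsplit : v + (P - 1 - t) = v % P + (P - 1 - t) + v / P * P := by
    have := Nat.mod_add_div v P
    rw [mul_comm] at this
    omega
  rw [hsplit, Nat.add_mul_div_right _ _ (by omega), hcarry, add_comm]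

lemma G2_apply_eq_natCast_div (p k : ℕ) [NeZero (p ^ k)] (u : ZMod (p ^ k))
    (t : Fin (p ^ (k - 1))) :
    G2 p k u t = (((u.val + (p ^ (k - 1) - 1 - t)) / p ^ (k - 1) : ℕ) : ZMod p) := by
  rw [Nat.add_sub_one_sub_div _ _ _ t.isLt, G2]
  split_ifs <;> simp

lemma G2_eq_zero_iff (p k : ℕ) (hk : 1 ≤ k) [NeZero (p ^ k)] (u : ZMod (p ^ k))
    (t : Fin (p ^ (k - 1))) :
    G2 p k u t = 0 ↔ (u.val + (p ^ (k - 1) - 1 - t)) % p ^ k < p ^ (k - 1) := by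
  have hpk : p ^ k = p ^ (k - 1) * p := by rw [← pow_succ, Nat.sub_add_cancel hk]
  have hcarry_dvd (y : ℕ) : y / p ^ (k - 1) % p = 0 ↔ y % p ^ k < p ^ (k - 1) := by
    rw [hpk, ← Nat.mod_mul_right_div_self, Nat.div_eq_zero_iff_lt t.pos]
  rw [G2_apply_eq_natCast_div, ZMod.natCast_eq_zero_iff, Nat.dvd_iff_mod_eq_zero, hcarry_dvd]

lemma Nat.mul_add_lt_mul_iff {x M Q r : ℕ} (hr : r < Q) : x * Q + r < M * Q ↔ x < M := by
  constructor
  · intro h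
    by_contra! hM
    have := Nat.mul_le_mul_right Q hM
    omega
  · intro h
    have := Nat.mul_le_mul_right Q (Nat.succ_le_of_lt h)
    rw [Nat.succ_mul] at this
    omega

lemma card_filter_Ico_mul_add_mod_lt (a N M Q c : ℕ) (hQ : 0 < Q) (hMN : M ≤ N) :
    #{s ∈ Ico a (a + N) | (s * Q + c) % (N * Q) < M * Q} = M := by
  have hper : Function.Periodic (fun s => (s * Q + c) % (N * Q) < M * Q) N := by
    intro s
    simp only [show (s + N) * Q + c = s * Q + c + N * Q by ring, Nat.add_mod_right]
  rw [Nat.filter_Ico_card_eq_of_periodic _ _ _ hper,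
    ← Nat.filter_Ico_card_eq_of_periodic ((N - 1) * (c / Q)) _ _ hper]
  obtain ⟨N, rfl⟩ | rfl : (∃ N', N = N' + 1) ∨ N = 0 := by cases N <;> simp
  swap
  · simp [Nat.le_zero.mp hMN]
  rw [Nat.add_sub_cancel]
  -- Starting the period at `b`, `(b + d) * Q + c ≡ d * Q + c % Q`: the window is `Ico b (b + M)`.
  set b := N * (c / Q)
  have hc0 : c % Q < Q := Nat.mod_lt _ hQ
  have hval (d : ℕ) (hd : d < N + 1) : ((b + d) * Q + c) % ((N + 1) * Q) = d * Q + c % Q := by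
    have : (b + d) * Q + c = d * Q + c % Q + c / Q * ((N + 1) * Q) := by
      conv_lhs => rw [← Nat.div_add_mod c Q]
      ring
    rw [this, Nat.add_mul_mod_self_right, Nat.mod_eq_of_lt ((Nat.mul_add_lt_mul_iff hc0).2 hd)]
  have hwindow : {s ∈ Ico b (b + (N + 1)) | (s * Q + c) % ((N + 1) * Q) < M * Q} =
      Ico b (b + M) := by
    ext s
    simp only [mem_filter, mem_Ico]
    constructor
    · rintro ⟨⟨hbs, hs⟩, hlt⟩
      obtain ⟨d, rfl⟩ := Nat.exists_eq_add_of_le hbs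
      rw [hval d (by omega), Nat.mul_add_lt_mul_iff hc0] at hlt
      omega
    · rintro ⟨hbs, hs⟩
      obtain ⟨d, rfl⟩ := Nat.exists_eq_add_of_le hbs
      refine ⟨⟨hbs, by omega⟩, ?_⟩
      rw [hval d (by omega), Nat.mul_add_lt_mul_iff hc0]
      omega
  rw [hwindow, Nat.card_Ico, Nat.add_sub_cancel_left]

lemma card_filter_G2_eq_zero (p k i : ℕ) (hp : 0 < p) (hk : 1 ≤ k) (hi : i ≤ k - 1)
    [NeZero (p ^ k)] (j : ℕ) (t : Fin (p ^ (k - 1))) :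
    #{s ∈ Icc 1 (p ^ (k - i)) | G2 p k ((s * p ^ i + j : ℕ) : ZMod (p ^ k)) t = 0} =
      p ^ (k - 1 - i) := by
  have hN : p ^ k = p ^ (k - i) * p ^ i := by rw [← pow_add]; congr 1; omega
  have hM : p ^ (k - 1) = p ^ (k - 1 - i) * p ^ i := by rw [← pow_add]; congr 1; omega
  rw [← card_filter_Ico_mul_add_mod_lt 1 (p ^ (k - i)) (p ^ (k - 1 - i)) (p ^ i)
    (j + (p ^ (k - 1) - 1 - t)) (pow_pos hp i) (Nat.pow_le_pow_right hp (by omega)),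
    add_comm 1, Ico_add_one_right_eq_Icc]
  refine congrArg card (filter_congr fun s _ => ?_)
  rw [G2_eq_zero_iff p k hk, ZMod.val_natCast, Nat.mod_add_mod, ← hN, ← hM, add_assoc]

lemma sum_card_filter_G2_eq_zero (p k i : ℕ) (hp : 0 < p) (hk : 1 ≤ k) (hi : i ≤ k - 1)
    [NeZero (p ^ k)] (j : ℕ) :
    ∑ s ∈ Icc 1 (p ^ (k - i)), #{t | G2 p k ((s * p ^ i + j : ℕ) : ZMod (p ^ k)) t = 0} =
      p ^ (k - 1) * p ^ (k - 1 - i) := by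
  refine (sum_card_bipartiteAbove_eq_sum_card_bipartiteBelow
    (fun s t => G2 p k ((s * p ^ i + j : ℕ) : ZMod (p ^ k)) t = 0)).trans ?_
  simp only [bipartiteBelow, card_filter_G2_eq_zero p k i hp hk hi, sum_const, card_univ,
    Fintype.card_fin, smul_eq_mul]

theorem stmt15_general (p k i : ℕ) (hodd : 2 < p) (hk : 2 ≤ k)
    (hi2 : i ≤ k - 1) [NeZero (p ^ k)] :
    ∀ m n : ℕ,
      (∑ s ∈ Finset.Icc 1 (p ^ (k - i)),
          (Finset.univ.filter
            (fun t => G2 p k ((s * p ^ i + m : ℕ) : ZMod (p ^ k)) t = 0)).card)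
        = ∑ s ∈ Finset.Icc 1 (p ^ (k - i)),
          (Finset.univ.filter
            (fun t => G2 p k ((s * p ^ i + n : ℕ) : ZMod (p ^ k)) t = 0)).card := by
  intro m n
  rw [sum_card_filter_G2_eq_zero p k i (by omega) (by omega) hi2,
    sum_card_filter_G2_eq_zero p k i (by omega) (by omega) hi2]

theorem stmt15 (p k i : ℕ) (hp : p.Prime) (hodd : 2 < p) (hk : 2 ≤ k)
    (hi1 : 1 ≤ i) (hi2 : i ≤ k - 1) [NeZero (p ^ k)] :
    ∀ m n : ℕ,
      (∑ s ∈ Finset.Icc 1 (p ^ (k - i)),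
          (Finset.univ.filter
            (fun t => G2 p k ((s * p ^ i + m : ℕ) : ZMod (p ^ k)) t = 0)).card)
        = ∑ s ∈ Finset.Icc 1 (p ^ (k - i)),
          (Finset.univ.filter
            (fun t => G2 p k ((s * p ^ i + n : ℕ) : ZMod (p ^ k)) t = 0)).card :=
  stmt15_general p k i hodd hk hi2
end

section
/- Let p be an odd prime, k ≥ 2, ζ a primitive p^k-th root of unity, and H = [ζ^{a_{ij}}] an n×n normalized Butson-Hadamard matrix BH(n, p^k). Let H' be the n × n·p^{k-1} matrix over ℤ_p obtained by applying the Gray map G₂ to each exponent a_{ij}. Then the Hamming distance between any two distinct rows of H' equals exactly n(p−1)p^{k-2}; in particular the code is equidistant with minimum distance d = n(p−1)p^{k-2}. -/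
open Finset

lemma IsPrimitiveRoot.sum_pow_pow_eq_zero_of_coprime {K ι : Type*} [Field K] [CharZero K]
    {ζ : K} {N : ℕ} (hζ : IsPrimitiveRoot ζ N) (hN : 0 < N) (s : Finset ι) (a : ι → ℕ)
    (h : ∑ i ∈ s, ζ ^ a i = 0) {t : ℕ} (ht : t.Coprime N) :
    ∑ i ∈ s, (ζ ^ t) ^ a i = 0 := by
  have haeval (x : K) : Polynomial.aeval x (∑ i ∈ s, Polynomial.X ^ a i : Polynomial ℚ) =
      ∑ i ∈ s, x ^ a i := by simp
  rw [← haeval, ← minpoly.dvd_iff,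
    ← Polynomial.cyclotomic_eq_minpoly_rat (hζ.pow_of_coprime t ht) hN,
    Polynomial.cyclotomic_eq_minpoly_rat hζ hN, minpoly.dvd_iff, haeval, h]

namespace AddChar

variable {N : ℕ} [NeZero N]

lemma map_mul_eq_pow_val {M : Type*} [CommMonoid M] (ψ : AddChar (ZMod N) M) (t x : ZMod N) :
    ψ (t * x) = ψ t ^ x.val := by
  rw [← map_nsmul_eq_pow, nsmul_eq_mul, ZMod.natCast_zmod_val, mul_comm]

lemma sum_map_unit_mul_eq_zero {K ι : Type*} [Field K] [CharZero K] (ψ : AddChar (ZMod N) K)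
    (s : Finset ι) (δ : ι → ZMod N) (h : ∑ i ∈ s, ψ (δ i) = 0) {t : ZMod N} (ht : IsUnit t) :
    ∑ i ∈ s, ψ (t * δ i) = 0 := by
  have hψ (x : ZMod N) : ψ x = ψ 1 ^ x.val := by rw [← map_mul_eq_pow_val, one_mul]
  have hN : ψ 1 ^ N = 1 := by
    rw [← map_nsmul_eq_pow, nsmul_eq_mul, mul_one, ZMod.natCast_self, map_zero_eq_one]
  have hord : 0 < orderOf (ψ 1) :=
    orderOf_pos_iff.mpr (isOfFinOrder_iff_pow_eq_one.mpr ⟨N, NeZero.pos N, hN⟩)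
  have hcop : t.val.Coprime (orderOf (ψ 1)) :=
    (ZMod.val_coe_unit_coprime ht.unit).coprime_dvd_right (orderOf_dvd_of_pow_eq_one hN)
  calc ∑ i ∈ s, ψ (t * δ i) = ∑ i ∈ s, (ψ 1 ^ t.val) ^ (δ i).val :=
        sum_congr rfl fun i _ => by rw [map_mul_eq_pow_val, hψ t]
    _ = 0 := (IsPrimitiveRoot.orderOf (ψ 1)).sum_pow_pow_eq_zero_of_coprime hord s _
        (by rw [← h]; exact sum_congr rfl fun i _ => (hψ _).symm) hcop

lemma sum_fin_map_mul_natCast_eq_zero {K : Type*} [Field K] {ψ : AddChar (ZMod N) K}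
    (hψ : ψ.IsPrimitive) {t : ZMod N} (ht : t ≠ 0) {m : ℕ} (hmt : (m : ZMod N) * t = 0) :
    ∑ b : Fin m, ψ (t * (b : ℕ)) = 0 := by
  have hne : ψ t ≠ 1 := fun h => ht ((hψ.zmod_char_eq_one_iff N t).mp h)
  have hpow : ψ t ^ m = 1 := by rw [← map_nsmul_eq_pow, nsmul_eq_mul, hmt, map_zero_eq_one]
  have hgeom := geom_sum_eq hne m
  rw [hpow, sub_self, zero_div] at hgeom
  rw [← hgeom, ← Fin.sum_univ_eq_sum_range]
  refine sum_congr rfl fun b _ => ?_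
  rw [mul_comm, ← nsmul_eq_mul, map_nsmul_eq_pow]

end AddChar

def diffCount (N m : ℕ) (w : ZMod N) : ℕ :=
  #{ab : Fin m × Fin m | ((ab.1 : ℕ) : ZMod N) - (ab.2 : ℕ) = w}

lemma natCast_mul_diffCount_eq_sum {N : ℕ} [NeZero N] {ψ : AddChar (ZMod N) ℂ} (hψ : ψ.IsPrimitive)
    (m : ℕ) (w : ZMod N) :
    (N : ℂ) * diffCount N m w = ∑ t, (∑ a : Fin m, ψ (t * (a : ℕ))) *
      (∑ b : Fin m, ψ (-t * (b : ℕ))) * ψ (-t * w) := by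
  calc (N : ℂ) * diffCount N m w
      = ∑ ab : Fin m × Fin m, ∑ t, ψ (t * ((ab.1 : ℕ) - (ab.2 : ℕ) - w)) := by
        rw [diffCount, card_filter, Nat.cast_sum, mul_sum]
        refine sum_congr rfl fun ab _ => ?_
        rw [AddChar.sum_mulShift _ hψ, ZMod.card]
        simp [sub_eq_zero]
    _ = ∑ t, ∑ a : Fin m, ∑ b : Fin m, ψ (t * (a : ℕ)) * ψ (-t * (b : ℕ)) * ψ (-t * w) := by
        rw [sum_comm]
        refine sum_congr rfl fun t _ => ?_
        rw [Fintype.sum_prod_type]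
        refine sum_congr rfl fun a _ => sum_congr rfl fun b _ => ?_
        rw [← AddChar.map_add_eq_mul, ← AddChar.map_add_eq_mul]
        ring_nf
    _ = _ := by simp only [sum_mul_sum]; simp only [sum_mul]

lemma sum_fin_map_mul_mul_sum_map_mul_eq_zero {p k : ℕ} [NeZero (p ^ k)] (hp : p.Prime)
    (hk : 1 ≤ k) {ψ : AddChar (ZMod (p ^ k)) ℂ} (hψ : ψ.IsPrimitive) {ι : Type*} [Fintype ι]
    (δ : ι → ZMod (p ^ k)) (h : ∑ l, ψ (δ l) = 0) {t : ZMod (p ^ k)} (ht : t ≠ 0) :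
    (∑ a : Fin (p ^ (k - 1)), ψ (t * (a : ℕ))) * ∑ l, ψ (t * δ l) = 0 := by
  by_cases hpt : p ∣ t.val
  · obtain ⟨c, hc⟩ := hpt
    have hmt : ((p ^ (k - 1) : ℕ) : ZMod (p ^ k)) * t = 0 := by
      rw [← ZMod.natCast_zmod_val t, hc, ← Nat.cast_mul, ← mul_assoc, pow_sub_one_mul (by omega),
        ZMod.natCast_eq_zero_iff]
      exact dvd_mul_right _ _
    rw [AddChar.sum_fin_map_mul_natCast_eq_zero hψ ht hmt, zero_mul]
  · have hcop : t.val.Coprime (p ^ k) :=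
      Nat.Coprime.pow_right k (hp.coprime_iff_not_dvd.mpr hpt).symm
    have hunit : IsUnit t := by
      rw [← ZMod.natCast_zmod_val t]; exact (ZMod.isUnit_iff_coprime _ _).mpr hcop
    rw [AddChar.sum_map_unit_mul_eq_zero ψ univ δ h hunit, mul_zero]

lemma sum_diffCount_mul_eq_of_sum_eq_zero {p k : ℕ} [NeZero (p ^ k)] (hp : p.Prime) (hk : 1 ≤ k)
    {ψ : AddChar (ZMod (p ^ k)) ℂ} (hψ : ψ.IsPrimitive) {ι : Type*} [Fintype ι]
    (δ : ι → ZMod (p ^ k)) (h : ∑ l, ψ (δ l) = 0) :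
    (∑ l, diffCount (p ^ k) (p ^ (k - 1)) (δ l)) * p = Fintype.card ι * p ^ (k - 1) := by
  have hcount : ((p ^ k : ℕ) : ℂ) * ∑ l, (diffCount (p ^ k) (p ^ (k - 1)) (δ l) : ℂ) =
      Fintype.card ι * p ^ (k - 1) * p ^ (k - 1) := by
    rw [mul_sum]
    simp_rw [natCast_mul_diffCount_eq_sum hψ]
    rw [sum_comm]
    simp_rw [← mul_sum]
    rw [Fintype.sum_eq_single 0 fun t ht => by
      rw [mul_assoc, sum_fin_map_mul_mul_sum_map_mul_eq_zero hp hk hψ δ h (neg_ne_zero.mpr ht),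
        mul_zero]]
    simp only [zero_mul, neg_zero, AddChar.map_zero_eq_one, sum_const, card_univ,
      Fintype.card_fin, nsmul_eq_mul, mul_one]
    push_cast
    ring
  have hcount' : ((∑ l, diffCount (p ^ k) (p ^ (k - 1)) (δ l)) * p * p ^ (k - 1) : ℂ) =
      Fintype.card ι * p ^ (k - 1) * p ^ (k - 1) := by
    have hpkC : ((p ^ k : ℕ) : ℂ) = p ^ (k - 1) * p := by
      exact_mod_cast (pow_sub_one_mul (by omega) p).symm
    rw [← hcount, hpkC]
    push_cast
    ring
  exact Nat.eq_of_mul_eq_mul_right (pow_pos hp.pos _) (by exact_mod_cast hcount')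

lemma ZMod.eq_natCast_val_mod_add_natCast_mul_div {N : ℕ} [NeZero N] (x : ZMod N) (m : ℕ) :
    x = ((x.val % m : ℕ) : ZMod N) + ((m * (x.val / m) : ℕ) : ZMod N) := by
  rw [← Nat.cast_add, Nat.mod_add_div, ZMod.natCast_zmod_val]

lemma ZMod.natCast_val_mod_eq_castHom {N m : ℕ} [NeZero N] (h : m ∣ N) (x : ZMod N) :
    ((x.val % m : ℕ) : ZMod m) = ZMod.castHom h (ZMod m) x := by
  rw [ZMod.natCast_mod, ZMod.castHom_apply, ZMod.cast_eq_val]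

section GrayMap

variable {p k : ℕ} [NeZero (p ^ k)]

lemma pow_sub_one_pos : 0 < p ^ (k - 1) :=
  Nat.pos_of_dvd_of_pos (pow_dvd_pow p (Nat.sub_le k 1)) (NeZero.pos _)

lemma G2_apply_eq_val_div (hk : 1 ≤ k) (u : ZMod (p ^ k)) (t : Fin (p ^ (k - 1))) :
    G2 p k u t = (((u + (t.rev : ℕ)).val / p ^ (k - 1) : ℕ) : ZMod p) := by
  have hm : 0 < p ^ (k - 1) := t.pos
  have hrev : (t.rev : ℕ) < p ^ (k - 1) := t.rev.isLt
  have hdigit (x : ℕ) : x % p ^ k / p ^ (k - 1) = x / p ^ (k - 1) % p := by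
    rw [← pow_sub_one_mul (by omega : k ≠ 0), Nat.mod_mul_right_div_self]
  rw [ZMod.val_add, ZMod.val_natCast, Nat.add_mod_mod, hdigit, ZMod.natCast_mod,
    Nat.add_div hm, Nat.div_eq_of_lt hrev, Nat.mod_eq_of_lt hrev, G2, Fin.val_rev]
  have hr := Nat.mod_lt u.val hm
  by_cases ht : (t : ℕ) < u.val % p ^ (k - 1)
  · rw [if_pos ht, if_pos (by omega)]; push_cast; ring
  · rw [if_neg ht, if_neg (by omega)]; push_cast; ring

lemma val_div_pow_sub_one_lt (hk : 1 ≤ k) (x : ZMod (p ^ k)) : x.val / p ^ (k - 1) < p := by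
  rw [Nat.div_lt_iff_lt_mul pow_sub_one_pos, mul_comm, pow_sub_one_mul (by omega : k ≠ 0)]
  exact ZMod.val_lt x

lemma G2_eq_G2_iff (hk : 1 ≤ k) (u v : ZMod (p ^ k)) (t : Fin (p ^ (k - 1))) :
    G2 p k u t = G2 p k v t ↔
      (((u + (t.rev : ℕ)).val % p ^ (k - 1) : ℕ) : ZMod (p ^ k)) -
        ((v + (t.rev : ℕ)).val % p ^ (k - 1) : ℕ) = u - v := by
  have hm : 0 < p ^ (k - 1) := t.pos
  have hx := (u + ((t.rev : ℕ) : ZMod (p ^ k))).eq_natCast_val_mod_add_natCast_mul_div (p ^ (k - 1))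
  have hy := (v + ((t.rev : ℕ) : ZMod (p ^ k))).eq_natCast_val_mod_add_natCast_mul_div (p ^ (k - 1))
  have hlt (x : ZMod (p ^ k)) : p ^ (k - 1) * (x.val / p ^ (k - 1)) < p ^ k :=
    (Nat.mul_div_le _ _).trans_lt (ZMod.val_lt x)
  rw [G2_apply_eq_val_div hk, G2_apply_eq_val_div hk, ZMod.natCast_eq_natCast_iff',
    Nat.mod_eq_of_lt (val_div_pow_sub_one_lt hk _), Nat.mod_eq_of_lt (val_div_pow_sub_one_lt hk _),
    ← Nat.mul_left_cancel_iff hm, ← Nat.mod_eq_of_lt (hlt (u + _)),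
    ← Nat.mod_eq_of_lt (hlt (v + _)), ← ZMod.natCast_eq_natCast_iff']
  constructor <;> intro h <;> linear_combination hy - hx - h

lemma val_add_rev_mod_injective (u : ZMod (p ^ k)) :
    Function.Injective fun t : Fin (p ^ (k - 1)) => (u + (t.rev : ℕ)).val % p ^ (k - 1) := by
  intro t₁ t₂ h
  have h' := congrArg (fun r : ℕ => (r : ZMod (p ^ (k - 1)))) h
  simp only [ZMod.natCast_val_mod_eq_castHom (pow_dvd_pow p (Nat.sub_le k 1)), map_add,
    map_natCast, add_right_inj, ZMod.natCast_eq_natCast_iff', Nat.mod_eq_of_lt (Fin.isLt _)] at h'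
  exact Fin.rev_injective (Fin.ext h')

lemma exists_val_add_rev_mod_eq (u v : ZMod (p ^ k)) (a b : Fin (p ^ (k - 1)))
    (hab : ((a : ℕ) : ZMod (p ^ k)) - (b : ℕ) = u - v) :
    ∃ t : Fin (p ^ (k - 1)), (u + (t.rev : ℕ)).val % p ^ (k - 1) = a ∧
      (v + (t.rev : ℕ)).val % p ^ (k - 1) = b := by
  have : NeZero (p ^ (k - 1)) := ⟨(pow_sub_one_pos (p := p) (k := k)).ne'⟩
  set π := ZMod.castHom (pow_dvd_pow p (Nat.sub_le k 1)) (ZMod (p ^ (k - 1)))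
  have hlow (x : ZMod (p ^ k)) (c : Fin (p ^ (k - 1))) (h : π x = ((c : ℕ) : ZMod _)) :
      x.val % p ^ (k - 1) = c := by
    rwa [← ZMod.natCast_val_mod_eq_castHom, ZMod.natCast_eq_natCast_iff', Nat.mod_mod,
      Nat.mod_eq_of_lt c.isLt] at h
  have hab' := congrArg π hab
  simp only [map_sub, map_natCast] at hab'
  set s := ((a : ℕ) : ZMod (p ^ (k - 1))) - π u
  have hs : π ((((Fin.rev ⟨s.val, ZMod.val_lt s⟩).rev : ℕ)) : ZMod (p ^ k)) = s := by
    rw [Fin.rev_rev, map_natCast]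
    exact ZMod.natCast_zmod_val s
  refine ⟨Fin.rev ⟨s.val, ZMod.val_lt s⟩, hlow _ _ ?_, hlow _ _ ?_⟩ <;> rw [map_add, hs]
  · ring
  · linear_combination hab'

lemma card_G2_agree_eq_diffCount (hk : 1 ≤ k) (u v : ZMod (p ^ k)) :
    #{t | G2 p k u t = G2 p k v t} = diffCount (p ^ k) (p ^ (k - 1)) (u - v) := by
  refine card_bij (fun t _ => (⟨(u + (t.rev : ℕ)).val % p ^ (k - 1), Nat.mod_lt _ t.pos⟩,
    ⟨(v + (t.rev : ℕ)).val % p ^ (k - 1), Nat.mod_lt _ t.pos⟩)) ?_ ?_ ?_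
  · intro t ht
    simp only [mem_filter, mem_univ, true_and] at ht ⊢
    exact (G2_eq_G2_iff hk u v t).mp ht
  · intro t₁ _ t₂ _ h
    exact val_add_rev_mod_injective u (congrArg (fun ab => (ab.1 : ℕ)) h)
  · intro ab hab
    simp only [mem_filter, mem_univ, true_and] at hab
    obtain ⟨t, ha, hb⟩ := exists_val_add_rev_mod_eq u v ab.1 ab.2 hab
    refine ⟨t, ?_, Prod.ext (Fin.ext ha) (Fin.ext hb)⟩
    simp only [mem_filter, mem_univ, true_and]
    rw [G2_eq_G2_iff hk, ha, hb, hab]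

end GrayMap

lemma hammingDist_add_card_filter_eq {ι β : Type*} [Fintype ι] [DecidableEq β] (x y : ι → β) :
    hammingDist x y + #{i | x i = y i} = Fintype.card ι := by
  rw [hammingDist, add_comm, card_filter_add_card_filter_not, card_univ]

lemma hammingDist_prod_eq_sum {α β γ : Type*} [Fintype α] [Fintype β] [DecidableEq γ]
    (x y : α × β → γ) :
    hammingDist x y = ∑ a, hammingDist (fun b => x (a, b)) (fun b => y (a, b)) := by
  simp only [hammingDist, card_filter, Fintype.sum_prod_type]

theorem stmt16_general (p k n : ℕ) (hp : p.Prime) (hk : 2 ≤ k)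
    [NeZero (p ^ k)] (ζ : ℂ) (hζ : IsPrimitiveRoot ζ (p ^ k))
    (A : Matrix (Fin n) (Fin n) (ZMod (p ^ k)))
    (hBH : ∀ i j, (∑ l, ζ ^ (A i l).val * star (ζ ^ (A j l).val))
        = if i = j then (n : ℂ) else 0) :
    ∀ i j : Fin n, i ≠ j →
      hammingDist (fun q : Fin n × Fin (p ^ (k - 1)) => G2 p k (A i q.1) q.2)
          (fun q : Fin n × Fin (p ^ (k - 1)) => G2 p k (A j q.1) q.2)
        = n * (p - 1) * p ^ (k - 2) := by
  intro i j hij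
  set ψ := AddChar.zmodChar (p ^ k) hζ.pow_eq_one
  have hrow : ∑ l, ψ (A i l - A j l) = 0 := by
    refine (sum_congr rfl fun l _ => ?_).trans ((hBH i j).trans (if_neg hij))
    rw [sub_eq_add_neg, AddChar.map_add_eq_mul, AddChar.map_neg_eq_conj, AddChar.zmodChar_apply,
      AddChar.zmodChar_apply]
    rfl
  have hdiff := sum_diffCount_mul_eq_of_sum_eq_zero hp (by omega)
    (AddChar.zmodChar_primitive_of_primitive_root _ hζ) _ hrow
  have hcol (l : Fin n) : hammingDist (G2 p k (A i l)) (G2 p k (A j l)) +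
      diffCount (p ^ k) (p ^ (k - 1)) (A i l - A j l) = p ^ (k - 1) := by
    rw [← card_G2_agree_eq_diffCount (by omega), hammingDist_add_card_filter_eq, Fintype.card_fin]
  have hsum := sum_congr rfl fun l (_ : l ∈ univ) => hcol l
  rw [sum_add_distrib, sum_const, card_univ, Fintype.card_fin, smul_eq_mul] at hsum
  have hm : p ^ (k - 1) = p ^ (k - 2) * p := by rw [← pow_succ]; congr 1; omega
  have hagree : ∑ l, diffCount (p ^ k) (p ^ (k - 1)) (A i l - A j l) = n * p ^ (k - 2) :=
    Nat.eq_of_mul_eq_mul_right hp.pos (by rw [hdiff, Fintype.card_fin, hm, mul_assoc])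
  rw [hammingDist_prod_eq_sum]
  zify [hp.one_le] at hsum hagree hm ⊢
  linear_combination hsum - hagree + n * hm

theorem stmt16 (p k n : ℕ) (hp : p.Prime) (hodd : 2 < p) (hk : 2 ≤ k) (hn : 0 < n)
    [NeZero (p ^ k)] (ζ : ℂ) (hζ : IsPrimitiveRoot ζ (p ^ k))
    (A : Matrix (Fin n) (Fin n) (ZMod (p ^ k)))
    (hBH : ∀ i j, (∑ l, ζ ^ (A i l).val * star (ζ ^ (A j l).val))
        = if i = j then (n : ℂ) else 0)
    (hnorm : ∀ i j : Fin n, A i ⟨0, hn⟩ = 0 ∧ A ⟨0, hn⟩ j = 0) :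
    ∀ i j : Fin n, i ≠ j →
      hammingDist (fun q : Fin n × Fin (p ^ (k - 1)) => G2 p k (A i q.1) q.2)
          (fun q : Fin n × Fin (p ^ (k - 1)) => G2 p k (A j q.1) q.2)
        = n * (p - 1) * p ^ (k - 2) :=
  stmt16_general p k n hp hk ζ hζ A hBH
end
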